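/- Let d ≥ 2, let L be a convex body in ℝ^d, let ξ ∈ S^{d-1}, and let t ∈ ℝ satisfy min_{x ∈ L} ⟨x, ξ⟩ < t < max_{x ∈ L} ⟨x, ξ⟩. Then lim_{ε→0⁺} (ε/2) ∫_{L} |⟨x, ξ⟩ − t|^{−1+ε} dx = V_{d-1}(L ∩ {x ∈ ℝ^d : ⟨x, ξ⟩ = t}), where the integral is with respect to d-dimensional Lebesgue measure and V_{d-1} denotes (d-1)-dimensional Lebesgue measure on the hyperplane {⟨x, ξ⟩ = t}. -/

import Mathlib

/-!
Writing `x = s • ξ + y` with `y ⊥ ξ`, Fubini turns `∫_L |⟪x, ξ⟫ - t| ^ (-1 + ε)` into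
`∫ g s * |s - t| ^ (-1 + ε) ds`, where `g s` is the `(d-1)`-volume of the slice of `L` at
height `s`. The kernels `(ε / 2) * |s - t| ^ (-1 + ε)` have mass one on `[t - 1, t + 1]` and
tend to zero uniformly away from `t`, so they are peak functions at `t`, and the limit is `g t`
as soon as `g` is integrable (its integral is `vol L`) and continuous at `t`.

Continuity is where convexity enters: if the slice at height `a` is nonempty, the slice at
`a + r * (s - a)` contains a translate of `r` times the slice at `s`, so
`r ^ (d-1) * g s ≤ g (a + r * (s - a))` for `0 ≤ r ≤ 1`. Using one such anchor `a` below `t`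
and one above, `g s` is squeezed between `c ^ (d-1) * g t` and `c' ^ (d-1) * g t` with
`c, c' → 1` as `s → t`.
-/

open MeasureTheory Metric Set Filter
open scoped RealInnerProductSpace

noncomputable section

abbrev Euc (d : ℕ) := EuclideanSpace ℝ (Fin d)

open Bornology
open scoped ENNReal Topology Pointwise

lemma integral_abs_rpow_Icc {p : ℝ} (hp : -1 < p) :
    ∫ x in Icc (-1 : ℝ) 1, |x| ^ p = 2 / (p + 1) := by
  have hind : (Icc (-1 : ℝ) 1).indicator (fun x => |x| ^ p) =
      fun x => (Iic (1 : ℝ)).indicator (· ^ p) |x| := by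
    ext x
    simp only [indicator, mem_Icc, mem_Iic, ← abs_le]
  rw [← integral_indicator measurableSet_Icc, hind, integral_comp_abs,
    setIntegral_indicator measurableSet_Iic, Ioi_inter_Iic,
    ← intervalIntegral.integral_of_le zero_le_one, integral_rpow (Or.inl hp)]
  rw [Real.one_rpow, Real.zero_rpow (by linarith), sub_zero, mul_one_div]

lemma tendstoUniformlyOn_mul_abs_rpow {δ : ℝ} (hδ : 0 < δ) :
    TendstoUniformlyOn (fun ε x : ℝ => ε / 2 * |x| ^ (-1 + ε)) 0 (𝓝[>] 0) {x | δ ≤ |x|} := by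
  have hbound : Tendsto (fun ε : ℝ => ε / 2 * δ ^ (-1 + ε)) (𝓝[>] 0) (𝓝 0) := by
    have : ContinuousAt (fun ε : ℝ => ε / 2 * δ ^ (-1 + ε)) 0 := by
      fun_prop (disch := positivity)
    simpa using this.tendsto.mono_left nhdsWithin_le_nhds
  rw [Metric.tendstoUniformlyOn_iff]
  intro η hη
  filter_upwards [hbound.eventually (gt_mem_nhds hη), Ioo_mem_nhdsGT zero_lt_one]
    with ε hεη ⟨hε0, hε1⟩ x (hx : δ ≤ |x|)
  have hφ : 0 ≤ ε / 2 * |x| ^ (-1 + ε) := by positivity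
  calc dist 0 (ε / 2 * |x| ^ (-1 + ε)) = ε / 2 * |x| ^ (-1 + ε) := by
        rw [dist_comm, Real.dist_0_eq_abs, abs_of_nonneg hφ]
    _ ≤ ε / 2 * δ ^ (-1 + ε) :=
        mul_le_mul_of_nonneg_left (Real.rpow_le_rpow_of_nonpos hδ hx (by linarith))
          (by positivity)
    _ < η := hεη

lemma tendsto_integral_mul_abs_rpow_smul {F : Type*} [NormedAddCommGroup F] [NormedSpace ℝ F]
    [CompleteSpace F] {g : ℝ → F} (hg : Integrable g) (hg0 : ContinuousAt g 0) :
    Tendsto (fun ε : ℝ => ∫ x, (ε / 2 * |x| ^ (-1 + ε)) • g x) (𝓝[>] 0) (𝓝 (g 0)) := by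
  refine tendsto_integral_peak_smul_of_integrable_of_tendsto measurableSet_Icc
    (Icc_mem_nhds (neg_lt_zero.mpr one_pos) one_pos) (by simp) ?_ ?_ ?_ ?_ hg hg0
  · filter_upwards [self_mem_nhdsWithin] with ε (hε : 0 < ε) x
    positivity
  · intro u hu h0u
    obtain ⟨δ, hδ, hδu⟩ := Metric.isOpen_iff.mp hu 0 h0u
    refine (tendstoUniformlyOn_mul_abs_rpow hδ).mono fun x hx => ?_
    by_contra! h
    exact hx (hδu (by simpa using h))
  · refine tendsto_const_nhds.congr' ?_
    filter_upwards [self_mem_nhdsWithin] with ε (hε : 0 < ε)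
    rw [integral_const_mul, integral_abs_rpow_Icc (by linarith), neg_add_cancel_comm]
    field_simp
  · exact Eventually.of_forall fun ε =>
      ((measurable_id.abs.pow_const _).const_mul _).aestronglyMeasurable

lemma tendsto_integral_mul_abs_sub_rpow_smul {F : Type*} [NormedAddCommGroup F]
    [NormedSpace ℝ F] [CompleteSpace F] {g : ℝ → F} (hg : Integrable g) {t : ℝ}
    (hgt : ContinuousAt g t) :
    Tendsto (fun ε : ℝ => ∫ x, (ε / 2 * |x - t| ^ (-1 + ε)) • g x) (𝓝[>] 0) (𝓝 (g t)) := by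
  have hshift := tendsto_integral_mul_abs_rpow_smul (hg.comp_add_right t)
    (hgt.comp_of_eq (continuous_add_const t).continuousAt (zero_add t))
  simp only [zero_add] at hshift
  refine hshift.congr fun ε => ?_
  rw [← integral_sub_right_eq_self _ t]
  simp

section Scaling

variable {g : ℝ → ℝ} {k : ℕ} {a s t : ℝ}

lemma pow_div_mul_le_of_scaling
    (ha : ∀ s r : ℝ, 0 ≤ r → r ≤ 1 → r ^ k * g s ≤ g (a + r * (s - a)))
    (hta : t ≠ a) (h0 : 0 ≤ (s - a) / (t - a)) (h1 : (s - a) / (t - a) ≤ 1) :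
    ((s - a) / (t - a)) ^ k * g t ≤ g s := by
  have := ha t _ h0 h1
  rwa [div_mul_cancel₀ _ (sub_ne_zero.mpr hta), add_sub_cancel] at this

lemma le_pow_div_mul_of_scaling
    (ha : ∀ s r : ℝ, 0 ≤ r → r ≤ 1 → r ^ k * g s ≤ g (a + r * (s - a)))
    (hta : t ≠ a) (h1 : 1 ≤ (s - a) / (t - a)) :
    g s ≤ ((s - a) / (t - a)) ^ k * g t := by
  have hc : 0 < (s - a) / (t - a) := by linarith
  have hsa : s ≠ a := by rintro rfl; simp at hc
  have hinv : (t - a) / (s - a) = ((s - a) / (t - a))⁻¹ := (inv_div _ _).symm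
  have := pow_div_mul_le_of_scaling ha hsa (by rw [hinv]; positivity)
    (by rw [hinv]; exact inv_le_one_of_one_le₀ h1)
  rwa [hinv, inv_pow, inv_mul_le_iff₀ (by positivity)] at this

lemma continuousAt_of_scaling {α β : ℝ}
    (hα : ∀ s r : ℝ, 0 ≤ r → r ≤ 1 → r ^ k * g s ≤ g (α + r * (s - α)))
    (hβ : ∀ s r : ℝ, 0 ≤ r → r ≤ 1 → r ^ k * g s ≤ g (β + r * (s - β)))
    (hαt : α < t) (htβ : t < β) : ContinuousAt g t := by
  set c : ℝ → ℝ → ℝ := fun a s => (s - a) / (t - a)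
  have hc : ∀ a, t ≠ a → ContinuousAt (c a) t ∧ c a t = 1 := fun a hta =>
    ⟨by fun_prop (disch := exact sub_ne_zero.mpr hta), div_self (sub_ne_zero.mpr hta)⟩
  have hcα := hc α hαt.ne'
  have hcβ := hc β htβ.ne
  have hlo : Tendsto (fun s => min (c α s) (c β s) ^ k * g t) (𝓝 t) (𝓝 (g t)) := by
    simpa [hcα.2, hcβ.2] using ((hcα.1.min hcβ.1).pow k).mul_const (g t)
  have hhi : Tendsto (fun s => max (c α s) (c β s) ^ k * g t) (𝓝 t) (𝓝 (g t)) := by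
    simpa [hcα.2, hcβ.2] using ((hcα.1.max hcβ.1).pow k).mul_const (g t)
  have hbounds : ∀ᶠ s in 𝓝 t,
      min (c α s) (c β s) ^ k * g t ≤ g s ∧ g s ≤ max (c α s) (c β s) ^ k * g t := by
    filter_upwards [Ioo_mem_nhds hαt htβ] with s ⟨hαs, hsβ⟩
    have hα0 : 0 < t - α := by linarith
    have hβ0 : t - β < 0 := by linarith
    rcases le_total s t with hst | hts
    · have hcα1 : c α s ≤ 1 := (div_le_one hα0).mpr (by linarith)
      have hcβ1 : 1 ≤ c β s := (one_le_div_of_neg hβ0).mpr (by linarith)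
      rw [min_eq_left (hcα1.trans hcβ1), max_eq_right (hcα1.trans hcβ1)]
      exact ⟨pow_div_mul_le_of_scaling hα hαt.ne' (div_nonneg (by linarith) hα0.le) hcα1,
        le_pow_div_mul_of_scaling hβ htβ.ne hcβ1⟩
    · have hcβ1 : c β s ≤ 1 := (div_le_one_of_neg hβ0).mpr (by linarith)
      have hcα1 : 1 ≤ c α s := (one_le_div hα0).mpr (by linarith)
      rw [min_eq_right (hcβ1.trans hcα1), max_eq_left (hcβ1.trans hcα1)]
      exact ⟨pow_div_mul_le_of_scaling hβ htβ.ne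
          (div_nonneg_of_nonpos (by linarith) hβ0.le) hcβ1,
        le_pow_div_mul_of_scaling hα hαt.ne' hcα1⟩
  exact tendsto_of_tendsto_of_tendsto_of_le_of_le' hlo hhi (hbounds.mono fun _ h => h.1)
    (hbounds.mono fun _ h => h.2)

end Scaling

section Slices

variable {E : Type*} [NormedAddCommGroup E] [InnerProductSpace ℝ E] {ξ : E}

lemma inner_smul_add_orthogonal (hξ : ‖ξ‖ = 1) (s : ℝ) (y : (ℝ ∙ ξ)ᗮ) :
    ⟪s • ξ + (y : E), ξ⟫ = s := by
  rw [inner_add_left, real_inner_smul_left, real_inner_self_eq_norm_sq, hξ, real_inner_comm,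
    Submodule.mem_orthogonal_singleton_iff_inner_right.mp y.2]
  ring

lemma exists_smul_inner_add_orthogonal (hξ : ‖ξ‖ = 1) (x : E) :
    ∃ y : (ℝ ∙ ξ)ᗮ, ⟪x, ξ⟫ • ξ + (y : E) = x := by
  refine ⟨⟨x - ⟪x, ξ⟫ • ξ, Submodule.mem_orthogonal_singleton_iff_inner_right.mpr ?_⟩, by simp⟩
  rw [inner_sub_right, real_inner_smul_right, real_inner_self_eq_norm_sq, hξ, real_inner_comm]
  ring

variable [FiniteDimensional ℝ E] [MeasurableSpace E] [BorelSpace E] {L : Set E}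

def sliceVolume (ξ : E) (L : Set E) (s : ℝ) : ℝ≥0∞ :=
  volume {y : (ℝ ∙ ξ)ᗮ | s • ξ + (y : E) ∈ L}

lemma measurePreserving_smul_add_orthogonal (hξ : ‖ξ‖ = 1) :
    MeasurePreserving (fun p : ℝ × (ℝ ∙ ξ)ᗮ => p.1 • ξ + (p.2 : E)) := by
  have h1 := ((LinearIsometryEquiv.toSpanUnitSingleton ξ hξ).measurePreserving).prod
    (MeasurePreserving.id (volume : Measure (ℝ ∙ ξ)ᗮ))
  have h2 := WithLp.volume_preserving_toLp (ℝ ∙ ξ) (ℝ ∙ ξ)ᗮ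
  have h3 := (Submodule.orthogonalDecomposition (ℝ ∙ ξ)).symm.measurePreserving
  rw [Measure.volume_eq_prod]
  convert h3.comp (h2.comp h1) using 1
  funext p
  simp

lemma measurable_sliceVolume (hξ : ‖ξ‖ = 1) (hL : MeasurableSet L) :
    Measurable (sliceVolume ξ L) :=
  measurable_measure_prodMk_left ((measurePreserving_smul_add_orthogonal hξ).measurable hL)

lemma sliceVolume_lt_top (hL : IsBounded L) (s : ℝ) : sliceVolume ξ L s < ∞ :=
  have : ProperSpace (ℝ ∙ ξ)ᗮ := FiniteDimensional.proper ℝ _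
  (((IsometryEquiv.addLeft (s • ξ)).isometry.comp isometry_subtype_coe).antilipschitz
    |>.isBounded_preimage hL).measure_lt_top

lemma lintegral_comp_inner_eq_lintegral_mul_sliceVolume (hξ : ‖ξ‖ = 1) (hL : MeasurableSet L)
    {h : ℝ → ℝ≥0∞} (hh : Measurable h) :
    ∫⁻ x in L, h ⟪x, ξ⟫ = ∫⁻ s, h s * sliceVolume ξ L s := by
  have hφ := measurePreserving_smul_add_orthogonal hξ
  have hS := hφ.measurable hL
  have hh₁ : Measurable fun p : ℝ × (ℝ ∙ ξ)ᗮ => h p.1 := hh.comp measurable_fst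
  rw [← hφ.setLIntegral_comp_preimage hL (f := fun x => h ⟪x, ξ⟫)
      (hh.comp (measurable_id.inner measurable_const))]
  simp only [inner_smul_add_orthogonal hξ]
  rw [Measure.volume_eq_prod, ← lintegral_indicator hS,
    lintegral_prod _ (hh₁.indicator hS).aemeasurable]
  exact lintegral_congr fun s => lintegral_indicator_const (measurable_prodMk_left hS) (h s)

lemma integral_comp_inner_eq_integral_mul_sliceVolume (hξ : ‖ξ‖ = 1) (hL : MeasurableSet L)
    (hLb : IsBounded L) {h : ℝ → ℝ} (hh : Measurable h) (h0 : ∀ s, 0 ≤ h s) :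
    ∫ x in L, h ⟪x, ξ⟫ = ∫ s, h s * (sliceVolume ξ L s).toReal := by
  rw [integral_eq_lintegral_of_nonneg_ae (f := fun x => h ⟪x, ξ⟫) (.of_forall fun x => h0 _)
      (hh.comp (measurable_id.inner measurable_const)).aestronglyMeasurable,
    integral_eq_lintegral_of_nonneg_ae
      (.of_forall fun s => mul_nonneg (h0 s) ENNReal.toReal_nonneg)
      (hh.mul (measurable_sliceVolume hξ hL).ennreal_toReal).aestronglyMeasurable,
    lintegral_comp_inner_eq_lintegral_mul_sliceVolume hξ hL hh.ennreal_ofReal]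
  congr 1
  refine lintegral_congr fun s => ?_
  rw [ENNReal.ofReal_mul (h0 s), ENNReal.ofReal_toReal (sliceVolume_lt_top hLb s).ne]

lemma integrable_sliceVolume_toReal (hξ : ‖ξ‖ = 1) (hL : MeasurableSet L)
    (hLv : volume L ≠ ∞) :
    Integrable fun s => (sliceVolume ξ L s).toReal := by
  refine integrable_toReal_of_lintegral_ne_top (measurable_sliceVolume hξ hL).aemeasurable ?_
  have h1 := lintegral_comp_inner_eq_lintegral_mul_sliceVolume hξ hL (h := 1) measurable_one
  simp only [Pi.one_apply, one_mul, setLIntegral_one] at h1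
  rwa [← h1]

lemma ofReal_pow_mul_sliceVolume_le (hLc : Convex ℝ L) {a : ℝ} {z : (ℝ ∙ ξ)ᗮ}
    (hz : a • ξ + (z : E) ∈ L) (s : ℝ) {r : ℝ} (h0 : 0 ≤ r) (h1 : r ≤ 1) :
    ENNReal.ofReal (r ^ Module.finrank ℝ (ℝ ∙ ξ)ᗮ) * sliceVolume ξ L s ≤
      sliceVolume ξ L (a + r * (s - a)) := by
  have hsub : (1 - r) • z +ᵥ r • {y : (ℝ ∙ ξ)ᗮ | s • ξ + (y : E) ∈ L} ⊆
      {y : (ℝ ∙ ξ)ᗮ | (a + r * (s - a)) • ξ + (y : E) ∈ L} := by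
    rintro _ ⟨_, ⟨y, hy, rfl⟩, rfl⟩
    simp only [mem_ofPred_eq, vadd_eq_add, Submodule.coe_add, Submodule.coe_smul]
    convert hLc hz hy (by linarith : 0 ≤ 1 - r) h0 (by ring) using 1
    module
  calc ENNReal.ofReal (r ^ Module.finrank ℝ (ℝ ∙ ξ)ᗮ) * sliceVolume ξ L s
      = volume ((1 - r) • z +ᵥ r • {y : (ℝ ∙ ξ)ᗮ | s • ξ + (y : E) ∈ L}) := by
        rw [measure_vadd, Measure.addHaar_smul, abs_of_nonneg (by positivity)]; rfl
    _ ≤ _ := measure_mono hsub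

lemma continuousAt_sliceVolume_toReal (hξ : ‖ξ‖ = 1) (hLc : Convex ℝ L) (hLb : IsBounded L)
    {p q : E} (hp : p ∈ L) (hq : q ∈ L) {t : ℝ} (hpt : ⟪p, ξ⟫ < t) (htq : t < ⟪q, ξ⟫) :
    ContinuousAt (fun s => (sliceVolume ξ L s).toReal) t := by
  have hscaling : ∀ x ∈ L, ∀ s r : ℝ, 0 ≤ r → r ≤ 1 →
      r ^ Module.finrank ℝ (ℝ ∙ ξ)ᗮ * (sliceVolume ξ L s).toReal ≤
        (sliceVolume ξ L (⟪x, ξ⟫ + r * (s - ⟪x, ξ⟫))).toReal := by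
    intro x hx s r h0 h1
    obtain ⟨z, hz⟩ := exists_smul_inner_add_orthogonal hξ x
    have := ENNReal.toReal_mono (sliceVolume_lt_top hLb _).ne
      (ofReal_pow_mul_sliceVolume_le hLc (hz ▸ hx) s h0 h1)
    rwa [ENNReal.toReal_mul, ENNReal.toReal_ofReal (by positivity)] at this
  exact continuousAt_of_scaling (hscaling p hp) (hscaling q hq) hpt htq

end Slices

theorem limit_eps_integral_section_volume_general
    (d : ℕ)
    (L : Set (Euc d)) (hL : IsCompact L) (hLc : Convex ℝ L)
    (ξ : Euc d) (hξ : ‖ξ‖ = 1) (t : ℝ)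
    (h₁ : sInf ((fun x : Euc d => ⟪x, ξ⟫) '' L) < t)
    (h₂ : t < sSup ((fun x : Euc d => ⟪x, ξ⟫) '' L)) :
    Tendsto
      (fun ε : ℝ => ε / 2 * ∫ x in L, |⟪x, ξ⟫ - t| ^ (-1 + ε))
      (nhdsWithin 0 (Set.Ioi 0))
      (nhds ((volume {y : (ℝ ∙ ξ)ᗮ | t • ξ + (y : Euc d) ∈ L}).toReal)) := by
  have hne : ((fun x : Euc d => ⟪x, ξ⟫) '' L).Nonempty := by
    by_contra h
    rw [not_nonempty_iff_eq_empty] at h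
    rw [h, Real.sInf_empty] at h₁
    rw [h, Real.sSup_empty] at h₂
    linarith
  obtain ⟨_, ⟨p, hp, rfl⟩, hpt⟩ := exists_lt_of_csInf_lt hne h₁
  obtain ⟨_, ⟨q, hq, rfl⟩, htq⟩ := exists_lt_of_lt_csSup hne h₂
  refine (tendsto_integral_mul_abs_sub_rpow_smul
    (integrable_sliceVolume_toReal hξ hL.measurableSet hL.measure_lt_top.ne)
    (continuousAt_sliceVolume_toReal hξ hLc hL.isBounded hp hq hpt htq)).congr' ?_
  filter_upwards [self_mem_nhdsWithin] with ε (hε : 0 < ε)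
  rw [integral_comp_inner_eq_integral_mul_sliceVolume hξ hL.measurableSet hL.isBounded
    (h := fun s => |s - t| ^ (-1 + ε)) ((measurable_id.sub_const t).abs.pow_const _)
    (fun s => by positivity), ← integral_const_mul]
  simp only [smul_eq_mul, mul_assoc]

/-- Let `d ≥ 2`, let `L` be a convex body in `ℝ^d`, let `ξ ∈ S^{d-1}`,
and let `t` satisfy `min_{x ∈ L} ⟨x, ξ⟩ < t < max_{x ∈ L} ⟨x, ξ⟩`. Then
`lim_{ε→0⁺} (ε/2) ∫_L |⟨x, ξ⟩ − t|^{−1+ε} dx = V_{d-1}(L ∩ {⟨x, ξ⟩ = t})`,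
where the `(d-1)`-dimensional Lebesgue measure of the section is computed via the
isometric parametrization `y ↦ tξ + y` of the hyperplane `{⟨x,ξ⟩ = t}` by `ξ^⊥`. -/
theorem limit_eps_integral_section_volume
    (d : ℕ) (hd : 2 ≤ d)
    (L : Set (Euc d)) (hL : IsCompact L) (hLc : Convex ℝ L)
    (hLi : (interior L).Nonempty)
    (ξ : Euc d) (hξ : ‖ξ‖ = 1) (t : ℝ)
    (h₁ : sInf ((fun x : Euc d => ⟪x, ξ⟫) '' L) < t)
    (h₂ : t < sSup ((fun x : Euc d => ⟪x, ξ⟫) '' L)) :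
    Tendsto
      (fun ε : ℝ => ε / 2 * ∫ x in L, |⟪x, ξ⟫ - t| ^ (-1 + ε))
      (nhdsWithin 0 (Set.Ioi 0))
      (nhds ((volume {y : (ℝ ∙ ξ)ᗮ | t • ξ + (y : Euc d) ∈ L}).toReal)) :=
  limit_eps_integral_section_volume_general d L hL hLc ξ hξ t h₁ h₂
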